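/- arXiv:nlin/0204054 — 7 statements merged into one kernel-verified Lean document; each statement's English description precedes it below -/
import Mathlib

section
/- The monic orthogonal polynomials p_0, ..., p_n with respect to a linear moment functional L on C[x] exist and are unique if and only if the Hankel determinants Δ_m = det(L(x^{i+j}))_{0≤i,j≤m-1} are nonzero for all m ≤ n+1. -/
open Polynomial Finset Matrix

private noncomputable def hmat (L : Polynomial ℂ →ₗ[ℂ] ℂ) (m : ℕ) : Matrix (Fin m) (Fin m) ℂ :=
  Matrix.of fun i j : Fin m => L (X ^ ((i : ℕ) + (j : ℕ)))

private lemma aux_expand (L : Polynomial ℂ →ₗ[ℂ] ℂ) (f g : Polynomial ℂ) {a b : ℕ}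
    (ha : f.natDegree < a) (hb : g.natDegree < b) :
    L (f * g) = ∑ i ∈ range a, ∑ j ∈ range b,
      f.coeff i * g.coeff j * L (X ^ (i + j)) := by
  conv_lhs => rw [f.as_sum_range' a ha, g.as_sum_range' b hb]
  rw [sum_mul_sum, map_sum]
  refine sum_congr rfl fun i _ => ?_
  rw [map_sum]
  refine sum_congr rfl fun j _ => ?_
  rw [monomial_mul_monomial, ← smul_X_eq_monomial, LinearMap.map_smul, smul_eq_mul]

private lemma aux_mul_left (L : Polynomial ℂ →ₗ[ℂ] ℂ) (f : Polynomial ℂ) {k : ℕ}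
    (hf : f.natDegree < k) (g : Polynomial ℂ) :
    L (f * g) = ∑ i ∈ range k, f.coeff i * L (X ^ i * g) := by
  conv_lhs => rw [f.as_sum_range' k hf]
  rw [sum_mul, map_sum]
  refine sum_congr rfl fun i _ => ?_
  rw [← smul_X_eq_monomial, smul_mul_assoc, LinearMap.map_smul, smul_eq_mul]

theorem stmt0 (L : Polynomial ℂ →ₗ[ℂ] ℂ) (n : ℕ) :
    (∃! p : Fin (n + 1) → Polynomial ℂ,
        (∀ k, (p k).Monic ∧ (p k).natDegree = (k : ℕ)) ∧
        (∀ k m, k ≠ m → L (p k * p m) = 0) ∧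
        (∀ k, L (p k * p k) ≠ 0)) ↔
      (∀ m : ℕ, m ≤ n + 1 →
        Matrix.det (Matrix.of fun i j : Fin m => L (X ^ ((i : ℕ) + (j : ℕ)))) ≠ 0) := by
  constructor
  · rintro ⟨p, ⟨hdm, horth, hne⟩, -⟩ m hm
    intro hdet0
    have hdet : (hmat L m).det = 0 := hdet0
    set e : Fin m → Fin (n + 1) := fun k => ⟨(k : ℕ), by omega⟩ with he
    set M : Matrix (Fin m) (Fin m) ℂ :=
      Matrix.of (fun k j : Fin m => (p (e k)).coeff (j : ℕ)) with hM
    have hdeg : ∀ k : Fin m, (p (e k)).natDegree < m := fun k => by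
      rw [(hdm (e k)).2]; exact k.isLt
    have entry : ∀ k l : Fin m, (M * hmat L m * Mᵀ) k l = L (p (e k) * p (e l)) := by
      intro k l
      rw [aux_expand L _ _ (hdeg k) (hdeg l)]
      rw [← Fin.sum_univ_eq_sum_range
        (fun i => ∑ j ∈ range m, (p (e k)).coeff i * (p (e l)).coeff j * L (X ^ (i + j))) m]
      simp only [Matrix.mul_apply, Matrix.transpose_apply, sum_mul]
      rw [Finset.sum_comm]
      refine sum_congr rfl fun i _ => ?_
      rw [← Fin.sum_univ_eq_sum_range
        (fun j => (p (e k)).coeff (i : ℕ) * (p (e l)).coeff j * L (X ^ ((i : ℕ) + j))) m]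
      refine sum_congr rfl fun j _ => ?_
      simp only [hM, hmat, Matrix.of_apply]
      ring
    have hdiag : M * hmat L m * Mᵀ = Matrix.diagonal fun k => L (p (e k) * p (e k)) := by
      ext k l
      by_cases h : k = l
      · subst h
        rw [entry, Matrix.diagonal_apply_eq]
      · rw [entry, Matrix.diagonal_apply_ne _ h]
        refine horth (e k) (e l) fun hh => h ?_
        exact Fin.ext (by simpa [he] using congrArg Fin.val hh)
    have hnz : (M * hmat L m * Mᵀ).det ≠ 0 := by
      rw [hdiag, Matrix.det_diagonal]
      exact Finset.prod_ne_zero_iff.mpr fun k _ => hne (e k)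
    exact hnz (by rw [Matrix.det_mul, Matrix.det_mul, hdet, mul_zero, zero_mul])
  · intro hΔ
    have hinv : ∀ m : ℕ, m ≤ n + 1 → ∀ x : Fin m → ℂ, (hmat L m).mulVec x = 0 → x = 0 := by
      intro m hm x hx
      have hu : IsUnit (hmat L m).det := isUnit_iff_ne_zero.mpr (hΔ m hm)
      calc x = Matrix.mulVec 1 x := (Matrix.one_mulVec x).symm
        _ = ((hmat L m)⁻¹ * hmat L m).mulVec x := by rw [Matrix.nonsing_inv_mul _ hu]
        _ = (hmat L m)⁻¹.mulVec ((hmat L m).mulVec x) := (Matrix.mulVec_mulVec _ _ _).symm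
        _ = 0 := by rw [hx, Matrix.mulVec_zero]
    have hsol : ∀ m : ℕ, m ≤ n + 1 → ∀ v : Fin m → ℂ,
        (hmat L m).mulVec ((hmat L m)⁻¹.mulVec v) = v := by
      intro m hm v
      have hu : IsUnit (hmat L m).det := isUnit_iff_ne_zero.mpr (hΔ m hm)
      rw [Matrix.mulVec_mulVec, Matrix.mul_nonsing_inv _ hu, Matrix.one_mulVec]
    set c : ∀ k : Fin (n + 1), Fin (k : ℕ) → ℂ :=
      fun k => -((hmat L (k : ℕ))⁻¹.mulVec (fun i : Fin (k : ℕ) => L (X ^ ((i : ℕ) + (k : ℕ)))))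
      with hc
    set P : Fin (n + 1) → Polynomial ℂ :=
      fun k => X ^ (k : ℕ) + ∑ j : Fin (k : ℕ), c k j • X ^ (j : ℕ) with hP
    have hmulvec : ∀ k : Fin (n + 1),
        (hmat L (k : ℕ)).mulVec (c k) = fun i : Fin (k : ℕ) => -L (X ^ ((i : ℕ) + (k : ℕ))) := by
      intro k
      rw [hc, Matrix.mulVec_neg, hsol _ (Nat.le_of_lt k.isLt)]
      rfl
    have hLXP : ∀ (k : Fin (n + 1)) (i : ℕ), L (X ^ i * P k) =
        L (X ^ (i + (k : ℕ))) + ∑ j : Fin (k : ℕ), c k j * L (X ^ (i + (j : ℕ))) := by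
      intro k i
      simp only [hP]
      rw [mul_add, Finset.mul_sum, map_add, map_sum, ← pow_add]
      congr 1
      refine sum_congr rfl fun j _ => ?_
      rw [mul_smul_comm, LinearMap.map_smul, smul_eq_mul, ← pow_add]
    have hB : ∀ (k : Fin (n + 1)) (i : ℕ), i < (k : ℕ) → L (X ^ i * P k) = 0 := by
      intro k i hi
      rw [hLXP]
      have h1 : ((hmat L (k : ℕ)).mulVec (c k)) ⟨i, hi⟩ = -L (X ^ (i + (k : ℕ))) := by
        rw [hmulvec]
      have h2 : ((hmat L (k : ℕ)).mulVec (c k)) ⟨i, hi⟩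
          = ∑ j : Fin (k : ℕ), c k j * L (X ^ (i + (j : ℕ))) := by
        simp only [Matrix.mulVec, dotProduct, hmat, Matrix.of_apply]
        exact sum_congr rfl fun j _ => mul_comm _ _
      rw [h2.symm.trans h1, add_neg_cancel]
    have hdegP : ∀ k : Fin (n + 1), (P k).Monic ∧ (P k).natDegree = (k : ℕ) := by
      intro k
      have hr : (∑ j : Fin (k : ℕ), c k j • X ^ (j : ℕ) : Polynomial ℂ).degree
          < ((k : ℕ) : WithBot ℕ) := by
        refine lt_of_le_of_lt (degree_sum_le _ _) ?_
        rw [Finset.sup_lt_iff (WithBot.bot_lt_coe _)]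
        intro j _
        refine lt_of_le_of_lt (degree_smul_le _ _) ?_
        rw [degree_X_pow]
        exact_mod_cast j.isLt
      constructor
      · simp only [hP]
        exact monic_X_pow_add hr
      · simp only [hP]
        refine natDegree_eq_of_degree_eq_some ?_
        rw [degree_add_eq_left_of_degree_lt (by rw [degree_X_pow]; exact hr), degree_X_pow]
    have hC : ∀ k : Fin (n + 1), L (X ^ (k : ℕ) * P k) ≠ 0 := by
      intro k h0
      set w : Fin ((k : ℕ) + 1) → ℂ :=
        fun j => if h : (j : ℕ) < (k : ℕ) then c k ⟨(j : ℕ), h⟩ else 1 with hw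
      have hw0 : (hmat L ((k : ℕ) + 1)).mulVec w = 0 := by
        funext i
        show ((hmat L ((k : ℕ) + 1)).mulVec w) i = 0
        have expand : ((hmat L ((k : ℕ) + 1)).mulVec w) i = L (X ^ (i : ℕ) * P k) := by
          rw [hLXP]
          simp only [Matrix.mulVec, dotProduct, hmat, Matrix.of_apply]
          rw [Fin.sum_univ_castSucc, add_comm]
          congr 1
          · simp [hw]
          · refine sum_congr rfl fun j _ => ?_
            simp only [hw, Fin.coe_castSucc]
            rw [dif_pos j.isLt]
            rw [mul_comm]
        rw [expand]
        rcases lt_or_eq_of_le (Nat.lt_succ_iff.mp i.isLt) with h | h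
        · exact hB k _ h
        · rw [h]; exact h0
      have hk1 : (k : ℕ) + 1 ≤ n + 1 := by have := k.isLt; omega
      have hzero := hinv ((k : ℕ) + 1) hk1 w hw0
      have hlast : w (Fin.last (k : ℕ)) = 1 := by
        simp [hw]
      rw [hzero] at hlast
      simp at hlast
    have hPP : ∀ k : Fin (n + 1), L (P k * P k) = L (X ^ (k : ℕ) * P k) := by
      intro k
      rw [aux_mul_left L (P k) (show (P k).natDegree < (k : ℕ) + 1 by rw [(hdegP k).2]; omega)
        (P k)]
      rw [Finset.sum_range_succ,
        Finset.sum_eq_zero fun i hi => by rw [hB k i (mem_range.mp hi), mul_zero], zero_add]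
      have h1 : (P k).coeff (k : ℕ) = 1 := by
        have := (hdegP k).1.coeff_natDegree
        rwa [(hdegP k).2] at this
      rw [h1, one_mul]
    have hOrth : ∀ k m : Fin (n + 1), k ≠ m → L (P k * P m) = 0 := by
      have aux : ∀ k m : Fin (n + 1), (k : ℕ) < (m : ℕ) → L (P k * P m) = 0 := by
        intro k m hkm
        rw [aux_mul_left L (P k) (show (P k).natDegree < (m : ℕ) by rw [(hdegP k).2]; exact hkm)
          (P m)]
        exact Finset.sum_eq_zero fun i hi => by rw [hB m i (mem_range.mp hi), mul_zero]
      intro k m hkm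
      rcases lt_or_gt_of_ne (show (k : ℕ) ≠ (m : ℕ) from fun h => hkm (Fin.ext h)) with h | h
      · exact aux k m h
      · rw [mul_comm]; exact aux m k h
    refine ⟨P, ⟨hdegP, hOrth, fun k => by rw [hPP]; exact hC k⟩, ?_⟩
    rintro q ⟨hqd, hqo, -⟩
    have hFq : ∀ (k : Fin (n + 1)) (d : ℕ), d ≤ (k : ℕ) →
        ∀ r : Polynomial ℂ, (∀ t, d ≤ t → r.coeff t = 0) → L (r * q k) = 0 := by
      intro k d
      induction d with
      | zero =>
        intro _ r hr
        have : r = 0 := Polynomial.ext fun t => by rw [hr t (Nat.zero_le t), coeff_zero]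
        rw [this, zero_mul, map_zero]
      | succ d ih =>
        intro hd r hr
        have hdn : d < n + 1 := by have := k.isLt; omega
        set d' : Fin (n + 1) := ⟨d, hdn⟩ with hd'
        set s := r - r.coeff d • q d' with hs
        have hscoeff : ∀ t, d ≤ t → s.coeff t = 0 := by
          intro t ht
          rw [hs, coeff_sub, coeff_smul, smul_eq_mul]
          rcases eq_or_lt_of_le ht with h | h
          · rw [← h]
            have h1 : (q d').coeff d = 1 := by
              have := (hqd d').1.coeff_natDegree
              rwa [(hqd d').2] at this
            rw [h1, mul_one, sub_self]
          · have hq0 : (q d').coeff t = 0 :=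
              coeff_eq_zero_of_natDegree_lt (by rw [(hqd d').2]; exact h)
            rw [hr t (by omega), hq0, mul_zero, sub_zero]
        have h1 : L (s * q k) = 0 := ih (by omega) s hscoeff
        have h2 : L (q d' * q k) = 0 := by
          refine hqo d' k fun hh => ?_
          have : (d' : ℕ) = (k : ℕ) := congrArg Fin.val hh
          simp only [hd'] at this
          omega
        have hrs : r = s + r.coeff d • q d' := by rw [hs]; ring
        rw [hrs, add_mul, smul_mul_assoc, map_add, LinearMap.map_smul, h1, h2, smul_eq_mul, mul_zero,
          add_zero]
    funext k
    have hq1 : (q k).coeff (k : ℕ) = 1 := by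
      have := (hqd k).1.coeff_natDegree
      rwa [(hqd k).2] at this
    have hp1 : (P k).coeff (k : ℕ) = 1 := by
      have := (hdegP k).1.coeff_natDegree
      rwa [(hdegP k).2] at this
    have hcs : ∀ t, (k : ℕ) ≤ t → (q k - P k).coeff t = 0 := by
      intro t ht
      rw [coeff_sub]
      rcases eq_or_lt_of_le ht with h | h
      · rw [← h, hq1, hp1, sub_self]
      · rw [coeff_eq_zero_of_natDegree_lt (by rw [(hqd k).2]; exact h),
          coeff_eq_zero_of_natDegree_lt (by rw [(hdegP k).2]; exact h), sub_self]
    rcases Nat.eq_zero_or_pos (k : ℕ) with hk0 | hkpos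
    · have : q k - P k = 0 := Polynomial.ext fun t => by
        rw [hcs t (by omega), coeff_zero]
      exact sub_eq_zero.mp this
    · have hdeglt : (q k - P k).natDegree < (k : ℕ) := by
        have h := natDegree_le_iff_coeff_eq_zero.mpr
          (fun N hN => hcs N (by omega) : ∀ N, (k : ℕ) - 1 < N → (q k - P k).coeff N = 0)
        omega
      set cs : Fin (k : ℕ) → ℂ := fun j => (q k - P k).coeff (j : ℕ) with hcsdef
      have hLs : ∀ i : ℕ, i < (k : ℕ) → L (X ^ i * (q k - P k)) = 0 := by
        intro i hi
        have hq0 : L (X ^ i * q k) = 0 := by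
          rw [show X ^ i * q k = X ^ i * q k from rfl]
          exact hFq k (i + 1) (by omega) (X ^ i)
            (fun t ht => by rw [coeff_X_pow]; exact if_neg (by omega))
        have hp0 : L (X ^ i * P k) = 0 := hB k i hi
        rw [mul_sub, map_sub, hq0, hp0, sub_zero]
      have hmv : (hmat L (k : ℕ)).mulVec cs = 0 := by
        funext i
        show ((hmat L (k : ℕ)).mulVec cs) i = 0
        have expand : ((hmat L (k : ℕ)).mulVec cs) i = L (X ^ (i : ℕ) * (q k - P k)) := by
          rw [mul_comm, aux_mul_left L _ hdeglt (X ^ (i : ℕ))]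
          simp only [Matrix.mulVec, dotProduct, hmat, Matrix.of_apply, hcsdef]
          rw [← Fin.sum_univ_eq_sum_range
            (fun j => (q k - P k).coeff j * L (X ^ j * X ^ (i : ℕ))) (k : ℕ)]
          refine sum_congr rfl fun j _ => ?_
          rw [← pow_add, mul_comm (L _) _, Nat.add_comm (j : ℕ) (i : ℕ)]
        rw [expand]
        exact hLs (i : ℕ) i.isLt
      have hcs0 : cs = 0 := hinv (k : ℕ) (by have := k.isLt; omega) cs hmv
      have : q k - P k = 0 := Polynomial.ext fun t => by
        rcases lt_or_ge t (k : ℕ) with h | h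
        · have := congrFun hcs0 ⟨t, h⟩
          simpa [hcsdef] using this
        · rw [hcs t h, coeff_zero]
      exact sub_eq_zero.mp this
end

section
/- The n-fold integral of the squared Vandermonde determinant times a product of weights equals n! times the Hankel determinant of moments: ∫···∫ ∏_{i<j}(x_i - x_j)^2 ∏_{j=1}^n w(x_j) dx_1···dx_n = n! · det(μ_{i+j})_{0≤i,j≤n-1}, where μ_k = ∫ x^k w(x) dx. -/
/-!
The squared Vandermonde product times `∏ⱼ w(xⱼ)` factors as `det (xⱼ ^ i) * det (xⱼ ^ i * w xⱼ)`.
Expanding both determinants over permutations `σ, τ`, every term is a product of one-variable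
functions, so by Fubini it integrates to `sign σ * sign τ * ∏ⱼ μ (σ j + τ j)`. For fixed `σ` the sum
over `τ` is the determinant of the Hankel matrix with rows permuted by `σ`, i.e. `sign σ` times the
Hankel determinant, so each of the `n!` permutations `σ` contributes the same amount (Andréief).
-/

open MeasureTheory Finset Equiv Matrix

section Algebra

variable {ι R : Type*} [Fintype ι] [DecidableEq ι] [CommRing R]

theorem Matrix.det_mul_det_eq_sum_perm_sum_perm (A B : Matrix ι ι R) :
    A.det * B.det = ∑ σ : Perm ι, ∑ τ : Perm ι,
      (Perm.sign σ * Perm.sign τ) • ∏ j, A (σ j) j * B (τ j) j := by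
  simp only [det_apply, sum_mul_sum, prod_mul_distrib, smul_mul_smul_comm]

theorem Matrix.sum_perm_sum_perm_sign_smul_prod_eq_factorial_smul_det (M : Matrix ι ι R) :
    ∑ σ : Perm ι, ∑ τ : Perm ι, (Perm.sign σ * Perm.sign τ) • ∏ j, M (σ j) (τ j)
      = (Fintype.card ι).factorial • M.det := by
  have sum_perm_row (σ : Perm ι) :
      ∑ τ : Perm ι, Perm.sign τ • ∏ j, M (σ j) (τ j) = Perm.sign σ • M.det :=
    calc ∑ τ : Perm ι, Perm.sign τ • ∏ j, M (σ j) (τ j)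
        = (M.submatrix σ id)ᵀ.det := by rw [det_apply]; rfl
      _ = Perm.sign σ • M.det := by
        rw [det_transpose, det_permute, Units.smul_def, zsmul_eq_mul]
  simp_rw [mul_smul, ← smul_sum, sum_perm_row, smul_smul, Int.units_mul_self, one_smul,
    sum_const, card_univ, Fintype.card_perm]

end Algebra

section Andreief

variable {ι α 𝕜 : Type*} [Fintype ι] [DecidableEq ι] [RCLike 𝕜] [MeasurableSpace α]
  {ν : Measure α} [SigmaFinite ν]

theorem MeasureTheory.integral_det_mul_det_eq_factorial_smul_det (f g : ι → α → 𝕜)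
    (hfg : ∀ i j, Integrable (fun t => f i t * g j t) ν) :
    ∫ x : ι → α, (of fun i j => f i (x j)).det * (of fun i j => g i (x j)).det
        ∂(Measure.pi fun _ => ν)
      = (Fintype.card ι).factorial • (of fun i j => ∫ t, f i t * g j t ∂ν).det := by
  have term (σ τ : Perm ι) : Integrable (fun x : ι → α => ∏ j, f (σ j) (x j) * g (τ j) (x j))
      (Measure.pi fun _ => ν) :=
    Integrable.fintype_prod fun j => hfg (σ j) (τ j)
  simp_rw [det_mul_det_eq_sum_perm_sum_perm,
    ← sum_perm_sum_perm_sign_smul_prod_eq_factorial_smul_det, of_apply, Units.smul_def]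
  rw [integral_finsetSum _ fun σ _ => integrable_finsetSum _ fun τ _ => (term σ τ).fun_smul _]
  refine sum_congr rfl fun σ _ => ?_
  rw [integral_finsetSum _ fun τ _ => (term σ τ).fun_smul _]
  refine sum_congr rfl fun τ _ => ?_
  rw [(term σ τ).integral_smul,
    integral_fintype_prod_eq_prod fun j t => f (σ j) t * g (τ j) t]

end Andreief

section Vandermonde

variable {R : Type*} [CommRing R] {n : ℕ}

theorem Matrix.prod_sub_sq_eq_det_vandermonde_sq (v : Fin n → R) :
    (∏ p ∈ univ.filter fun p : Fin n × Fin n => p.1 < p.2, (v p.1 - v p.2)) ^ 2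
      = (vandermonde v).det ^ 2 := by
  have det_eq : ∏ p ∈ univ.filter fun p : Fin n × Fin n => p.1 < p.2, (v p.2 - v p.1)
      = (vandermonde v).det := by
    rw [det_vandermonde, prod_filter, Fintype.prod_prod_type]
    simp only [← filter_lt_eq_Ioi, prod_filter]
  rw [← det_eq, ← prod_pow, ← prod_pow]
  exact prod_congr rfl fun p _ => by ring

theorem Matrix.prod_sub_sq_mul_prod_eq_det_mul_det (v c : Fin n → R) :
    (∏ p ∈ univ.filter fun p : Fin n × Fin n => p.1 < p.2, (v p.1 - v p.2)) ^ 2 * ∏ j, c j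
      = (of fun i j : Fin n => v j ^ (i : ℕ)).det
        * (of fun i j : Fin n => v j ^ (i : ℕ) * c j).det := by
  have weighted : (of fun i j : Fin n => v j ^ (i : ℕ) * c j)
      = of fun i j => c j * (vandermonde v)ᵀ i j := by
    ext i j
    exact mul_comm _ _
  rw [prod_sub_sq_eq_det_vandermonde_sq, weighted, det_mul_row, sq]
  change _ = (vandermonde v)ᵀ.det * _
  rw [det_transpose]
  ring

end Vandermonde

theorem stmt1_general (n : ℕ) (w : ℝ → ℂ) (μ : ℕ → ℂ)
    (hw : ∀ k : ℕ, Integrable (fun x : ℝ => (x : ℂ) ^ k * w x))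
    (hμ : ∀ k : ℕ, μ k = ∫ x : ℝ, (x : ℂ) ^ k * w x) :
    (∫ x : Fin n → ℝ,
        (∏ p ∈ Finset.univ.filter fun p : Fin n × Fin n => p.1 < p.2,
          ((x p.1 : ℂ) - (x p.2 : ℂ))) ^ 2 * ∏ j, w (x j))
      = (Nat.factorial n : ℂ) * Matrix.det (Matrix.of fun i j : Fin n => μ ((i : ℕ) + (j : ℕ))) := by
  have integrand (x : Fin n → ℝ) :
      (∏ p ∈ Finset.univ.filter fun p : Fin n × Fin n => p.1 < p.2,
          ((x p.1 : ℂ) - (x p.2 : ℂ))) ^ 2 * ∏ j, w (x j)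
        = (of fun i j : Fin n => (x j : ℂ) ^ (i : ℕ)).det
          * (of fun i j : Fin n => (x j : ℂ) ^ (i : ℕ) * w (x j)).det :=
    prod_sub_sq_mul_prod_eq_det_mul_det (fun i => (x i : ℂ)) fun j => w (x j)
  have moment (i j : Fin n) : (fun t : ℝ => (t : ℂ) ^ (i : ℕ) * ((t : ℂ) ^ (j : ℕ) * w t))
      = fun t : ℝ => (t : ℂ) ^ ((i : ℕ) + j) * w t := by
    simp only [pow_add, mul_assoc]
  rw [funext integrand, volume_pi, integral_det_mul_det_eq_factorial_smul_det
    (fun (i : Fin n) (t : ℝ) => (t : ℂ) ^ (i : ℕ))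
    (fun (i : Fin n) (t : ℝ) => (t : ℂ) ^ (i : ℕ) * w t) fun i j => moment i j ▸ hw _]
  simp only [moment, ← hμ, Fintype.card_fin, nsmul_eq_mul]

theorem stmt1 (n : ℕ) (w : ℝ → ℂ) (μ : ℕ → ℂ)
    (hw : ∀ k : ℕ, Integrable (fun x : ℝ => (x : ℂ) ^ k * w x))
    (hμ : ∀ k : ℕ, μ k = ∫ x : ℝ, (x : ℂ) ^ k * w x)
    (hint : Integrable (fun x : Fin n → ℝ =>
      (∏ p ∈ Finset.univ.filter fun p : Fin n × Fin n => p.1 < p.2,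
        ((x p.1 : ℂ) - (x p.2 : ℂ))) ^ 2 * ∏ j, w (x j))) :
    (∫ x : Fin n → ℝ,
        (∏ p ∈ Finset.univ.filter fun p : Fin n × Fin n => p.1 < p.2,
          ((x p.1 : ℂ) - (x p.2 : ℂ))) ^ 2 * ∏ j, w (x j))
      = (Nat.factorial n : ℂ) * Matrix.det (Matrix.of fun i j : Fin n => μ ((i : ℕ) + (j : ℕ))) :=
  stmt1_general n w μ hw hμ
end

section
/- For the quasi-polynomials ψ_n = h_n^{-1/2} p_n e^{-V/2} with V a polynomial of degree d+1, the derivative matrix P defined by ψ_n' = ∑_m P_{nm} ψ_m equals P = -(1/2)(V'(Q)_+ - V'(Q)_-), where Q is the Jacobi matrix of the three-term recursion and A_± denote the strictly upper/lower triangular parts. -/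
open Polynomial

/-- Entry of the `K`-th power of a banded (tridiagonal) semi-infinite matrix. -/
noncomputable def matPow (Q : ℕ → ℕ → ℂ) : ℕ → ℕ → ℕ → ℂ
  | 0 => fun n m => if n = m then 1 else 0
  | K + 1 => fun n m => ∑ k ∈ Finset.range (n + K + 2), matPow Q K n k * Q k m

/-- Entry of `W(Q)` for a polynomial `W` and a banded semi-infinite matrix `Q`. -/
noncomputable def polyMat (W : Polynomial ℂ) (Q : ℕ → ℕ → ℂ) (n m : ℕ) : ℂ :=
  ∑ K ∈ Finset.range (W.natDegree + 1), W.coeff K * matPow Q K n m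

/-!
Differentiating `ψ_n = p_n e^{-V/2} / s_n` gives `ψ_n' = (p_n' / s_n) e^{-V/2} - V' ψ_n / 2`.
The first term is a quasi-polynomial of degree `< n`, hence orthogonal to `ψ_m` for `m ≥ n`,
while `x ψ_n = ∑ Q_{nk} ψ_k` shows that the moments of `V'(x) ψ_n ψ_m` are the entries of `V'(Q)`.
So `P_{nm} = -V'(Q)_{nm} / 2` on and above the diagonal; below it, antisymmetry of `P` and symmetry
of `V'(Q)` give the rest.
-/

open Finset

theorem Polynomial.exists_eq_sum_smul_of_degree_lt {R : Type*} [CommRing R] {p : ℕ → R[X]}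
    (hp : ∀ n, (p n).Monic ∧ (p n).natDegree = n) {N : ℕ} {r : R[X]} (hr : r.degree < N) :
    ∃ c : ℕ → R, r = ∑ k ∈ range N, c k • p k := by
  induction N generalizing r with
  | zero => exact ⟨0, by simpa using hr⟩
  | succ N ih =>
    have hq : (r - C (r.coeff N) * p N).degree < N := by
      rw [degree_lt_iff_coeff_zero]
      intro m hm
      rcases (show N ≤ m by exact_mod_cast hm).eq_or_lt with rfl | hlt
      · have hlead := (hp N).1.coeff_natDegree
        rw [(hp N).2] at hlead
        simp [hlead]
      · have hr_m : r.coeff m = 0 := coeff_eq_zero_of_degree_lt (hr.trans_le (by exact_mod_cast hlt))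
        have hp_m : (p N).coeff m = 0 := coeff_eq_zero_of_natDegree_lt (by rw [(hp N).2]; exact hlt)
        simp [hr_m, hp_m]
    obtain ⟨c, hc⟩ := ih hq
    refine ⟨Function.update c N (r.coeff N), ?_⟩
    rw [sum_range_succ, Function.update_self,
      sum_congr rfl fun k hk => by rw [Function.update_of_ne (mem_range.mp hk).ne], ← hc,
      smul_eq_C_mul, sub_add_cancel]

section Orthonormal

variable {𝕜 α : Type*} [CommSemiring 𝕜] {I : (α → 𝕜) →ₗ[𝕜] 𝕜} {ψ : ℕ → α → 𝕜}

theorem apply_sum_mul_of_orthonormal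
    (horth : ∀ n m, I (fun x => ψ n x * ψ m x) = if n = m then 1 else 0)
    (F : Finset ℕ) (c : ℕ → 𝕜) (m : ℕ) :
    I (fun x => (∑ k ∈ F, c k * ψ k x) * ψ m x) = if m ∈ F then c m else 0 := by
  have hsplit : (fun x => (∑ k ∈ F, c k * ψ k x) * ψ m x) = ∑ k ∈ F, c k • fun x => ψ k x * ψ m x := by
    ext x
    simp only [sum_mul, Finset.sum_apply, Pi.smul_apply, smul_eq_mul, mul_assoc]
  simp only [hsplit, map_sum, map_smul, horth, smul_eq_mul, mul_ite, mul_one, mul_zero,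
    sum_ite_eq']

theorem apply_mul_of_eq_sum_range
    (horth : ∀ n m, I (fun x => ψ n x * ψ m x) = if n = m then 1 else 0)
    {f : α → 𝕜} {N : ℕ} {c : ℕ → 𝕜} (hf : ∀ x, f x = ∑ k ∈ range N, c k * ψ k x) (m : ℕ) :
    I (fun x => f x * ψ m x) = if m < N then c m else 0 := by
  simp only [hf, apply_sum_mul_of_orthonormal horth, mem_range]

end Orthonormal

section QuasiPolynomial

variable {𝕜 : Type*} [Field 𝕜] {I : (𝕜 → 𝕜) →ₗ[𝕜] 𝕜} {p : ℕ → 𝕜[X]} {s : ℕ → 𝕜} {w : 𝕜 → 𝕜}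
  {ψ : ℕ → 𝕜 → 𝕜}

theorem exists_eval_mul_eq_sum_of_degree_lt (hp : ∀ n, (p n).Monic ∧ (p n).natDegree = n)
    (hs : ∀ n, s n ≠ 0) (hψ : ∀ n x, ψ n x = eval x (p n) * w x / s n) {r : 𝕜[X]} {N : ℕ}
    (hr : r.degree < N) :
    ∃ c : ℕ → 𝕜, ∀ x, eval x r * w x = ∑ k ∈ range N, c k * ψ k x := by
  obtain ⟨c, rfl⟩ := exists_eq_sum_smul_of_degree_lt hp hr
  refine ⟨fun k => c k * s k, fun x => ?_⟩
  simp only [eval_finsetSum, eval_smul, smul_eq_mul, sum_mul, hψ]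
  exact sum_congr rfl fun k _ => by field_simp [hs k]

theorem apply_eval_mul_eq_zero_of_degree_lt
    (horth : ∀ n m, I (fun x => ψ n x * ψ m x) = if n = m then 1 else 0)
    (hp : ∀ n, (p n).Monic ∧ (p n).natDegree = n) (hs : ∀ n, s n ≠ 0)
    (hψ : ∀ n x, ψ n x = eval x (p n) * w x / s n) {r : 𝕜[X]} {m : ℕ} (hr : r.degree < m) :
    I (fun x => eval x r * w x * ψ m x) = 0 := by
  obtain ⟨c, hc⟩ := exists_eval_mul_eq_sum_of_degree_lt hp hs hψ hr
  simpa using apply_mul_of_eq_sum_range horth hc m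

theorem eval_mul_eq_sum_apply_of_degree_lt
    (horth : ∀ n m, I (fun x => ψ n x * ψ m x) = if n = m then 1 else 0)
    (hp : ∀ n, (p n).Monic ∧ (p n).natDegree = n) (hs : ∀ n, s n ≠ 0)
    (hψ : ∀ n x, ψ n x = eval x (p n) * w x / s n) {r : 𝕜[X]} {N : ℕ} (hr : r.degree < N)
    (x : 𝕜) :
    eval x r * w x = ∑ k ∈ range N, I (fun y => eval y r * w y * ψ k y) * ψ k x := by
  obtain ⟨c, hc⟩ := exists_eval_mul_eq_sum_of_degree_lt hp hs hψ hr
  rw [hc x]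
  refine sum_congr rfl fun k hk => ?_
  rw [apply_mul_of_eq_sum_range horth hc, if_pos (mem_range.mp hk)]

theorem mul_eq_eval_mul (hψ : ∀ n x, ψ n x = eval x (p n) * w x / s n) (n : ℕ) (x : 𝕜) :
    x * ψ n x = eval x (C (s n)⁻¹ * (X * p n)) * w x := by
  simp only [hψ, eval_mul, eval_C, eval_X]
  ring

theorem degree_C_inv_mul_X_mul (hp : ∀ n, (p n).Monic ∧ (p n).natDegree = n)
    (hs : ∀ n, s n ≠ 0) (n : ℕ) : (C (s n)⁻¹ * (X * p n)).degree = ↑(n + 1) := by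
  rw [degree_C_mul (inv_ne_zero (hs n)), degree_mul, degree_X, degree_eq_natDegree (hp n).1.ne_zero, (hp n).2,
    add_comm]
  rfl

variable {Q : ℕ → ℕ → 𝕜}

theorem jacobi_eq_zero_of_lt (horth : ∀ n m, I (fun x => ψ n x * ψ m x) = if n = m then 1 else 0)
    (hp : ∀ n, (p n).Monic ∧ (p n).natDegree = n) (hs : ∀ n, s n ≠ 0)
    (hψ : ∀ n x, ψ n x = eval x (p n) * w x / s n)
    (hQ : ∀ n m, Q n m = I (fun x => x * ψ n x * ψ m x)) {n m : ℕ} (h : n + 1 < m) :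
    Q n m = 0 := by
  simp only [hQ, mul_eq_eval_mul hψ]
  exact apply_eval_mul_eq_zero_of_degree_lt horth hp hs hψ
    (by rw [degree_C_inv_mul_X_mul hp hs]; exact_mod_cast h)

theorem mul_eq_sum_jacobi (horth : ∀ n m, I (fun x => ψ n x * ψ m x) = if n = m then 1 else 0)
    (hp : ∀ n, (p n).Monic ∧ (p n).natDegree = n) (hs : ∀ n, s n ≠ 0)
    (hψ : ∀ n x, ψ n x = eval x (p n) * w x / s n)
    (hQ : ∀ n m, Q n m = I (fun x => x * ψ n x * ψ m x)) (n : ℕ) (x : 𝕜) :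
    x * ψ n x = ∑ k ∈ range (n + 2), Q n k * ψ k x := by
  simp only [hQ, mul_eq_eval_mul hψ]
  exact eval_mul_eq_sum_apply_of_degree_lt horth hp hs hψ
    (by rw [degree_C_inv_mul_X_mul hp hs]; exact_mod_cast (by omega : n + 1 < n + 2)) x

end QuasiPolynomial

section MatPow

variable {Q : ℕ → ℕ → ℂ}

theorem matPow_eq_zero_of_lt (hQ : ∀ n m, n + 1 < m → Q n m = 0) {K n m : ℕ} (h : n + K < m) :
    matPow Q K n m = 0 := by
  induction K generalizing m with
  | zero => simp only [matPow, if_neg (by omega : n ≠ m)]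
  | succ K ih =>
    refine sum_eq_zero fun k _ => ?_
    by_cases hk : n + K < k
    · rw [ih hk, zero_mul]
    · rw [hQ k m (by omega), mul_zero]

variable {ψ : ℕ → ℂ → ℂ}

theorem pow_mul_eq_sum_matPow (hQ : ∀ n m, n + 1 < m → Q n m = 0)
    (hx : ∀ n x, x * ψ n x = ∑ k ∈ range (n + 2), Q n k * ψ k x) (K n : ℕ) (x : ℂ) :
    x ^ K * ψ n x = ∑ k ∈ range (n + K + 1), matPow Q K n k * ψ k x := by
  induction K with
  | zero => simp [matPow]
  | succ K ih =>
    calc x ^ (K + 1) * ψ n x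
        = ∑ k ∈ range (n + K + 1), matPow Q K n k * (x * ψ k x) := by
          rw [pow_succ', mul_assoc, ih, mul_sum]
          exact sum_congr rfl fun k _ => by ring
      _ = ∑ k ∈ range (n + K + 1), ∑ j ∈ range (n + K + 2), matPow Q K n k * Q k j * ψ j x := by
          refine sum_congr rfl fun k hk => ?_
          rw [hx, mul_sum]
          simp_rw [← mul_assoc]
          refine sum_subset (range_subset_range.mpr (by simp at hk; omega)) fun j _ hj => ?_
          rw [hQ k j (by simp at hj; omega), mul_zero, zero_mul]
      _ = ∑ j ∈ range (n + K + 2), (∑ k ∈ range (n + K + 1), matPow Q K n k * Q k j) * ψ j x := by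
          rw [sum_comm]
          simp only [sum_mul]
      _ = ∑ j ∈ range (n + (K + 1) + 1), matPow Q (K + 1) n j * ψ j x := by
          refine sum_congr rfl fun j _ => ?_
          rw [show matPow Q (K + 1) n j = ∑ k ∈ range (n + K + 1 + 1), matPow Q K n k * Q k j from rfl,
            sum_range_succ _ (n + K + 1), matPow_eq_zero_of_lt hQ (lt_add_one _), zero_mul, add_zero]

theorem apply_pow_mul_mul_eq_matPow {I : (ℂ → ℂ) →ₗ[ℂ] ℂ}
    (horth : ∀ n m, I (fun x => ψ n x * ψ m x) = if n = m then 1 else 0)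
    (hQ : ∀ n m, n + 1 < m → Q n m = 0)
    (hx : ∀ n x, x * ψ n x = ∑ k ∈ range (n + 2), Q n k * ψ k x) (K n m : ℕ) :
    I (fun x => x ^ K * ψ n x * ψ m x) = matPow Q K n m := by
  rw [apply_mul_of_eq_sum_range horth (pow_mul_eq_sum_matPow hQ hx K n) m]
  split_ifs with h
  · rfl
  · exact (matPow_eq_zero_of_lt hQ (by omega)).symm

theorem apply_eval_mul_mul_eq_polyMat {I : (ℂ → ℂ) →ₗ[ℂ] ℂ}
    (horth : ∀ n m, I (fun x => ψ n x * ψ m x) = if n = m then 1 else 0)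
    (hQ : ∀ n m, n + 1 < m → Q n m = 0)
    (hx : ∀ n x, x * ψ n x = ∑ k ∈ range (n + 2), Q n k * ψ k x) (W : ℂ[X]) (n m : ℕ) :
    I (fun x => eval x W * ψ n x * ψ m x) = polyMat W Q n m := by
  have hW : (fun x => eval x W * ψ n x * ψ m x)
      = ∑ K ∈ range (W.natDegree + 1), W.coeff K • fun x => x ^ K * ψ n x * ψ m x := by
    ext x
    simp only [eval_eq_sum_range, sum_mul, Finset.sum_apply, Pi.smul_apply, smul_eq_mul, mul_assoc]
  simp only [hW, map_sum, map_smul, apply_pow_mul_mul_eq_matPow horth hQ hx, polyMat, smul_eq_mul]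

theorem polyMat_symm {I : (ℂ → ℂ) →ₗ[ℂ] ℂ}
    (horth : ∀ n m, I (fun x => ψ n x * ψ m x) = if n = m then 1 else 0)
    (hQ : ∀ n m, n + 1 < m → Q n m = 0)
    (hx : ∀ n x, x * ψ n x = ∑ k ∈ range (n + 2), Q n k * ψ k x) (W : ℂ[X]) (n m : ℕ) :
    polyMat W Q n m = polyMat W Q m n := by
  simp only [← apply_eval_mul_mul_eq_polyMat horth hQ hx, mul_right_comm _ (ψ n _)]

end MatPow

theorem hasDerivAt_eval_mul_exp (q V : ℂ[X]) (x : ℂ) :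
    HasDerivAt (fun y => eval y q * Complex.exp (-(eval y V) / 2))
      (eval x (derivative q) * Complex.exp (-(eval x V) / 2)
        - 1 / 2 * eval x (derivative V) * (eval x q * Complex.exp (-(eval x V) / 2))) x := by
  refine ((q.hasDerivAt x).mul ((V.hasDerivAt x).neg.div_const 2).cexp).congr_deriv ?_
  simp only [Pi.neg_apply]
  ring

theorem apply_deriv_mul_eq_polyMat_of_le {V : ℂ[X]} {I : (ℂ → ℂ) →ₗ[ℂ] ℂ} {p : ℕ → ℂ[X]}
    {s : ℕ → ℂ} {ψ : ℕ → ℂ → ℂ} {Q : ℕ → ℕ → ℂ}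
    (horth : ∀ n m, I (fun x => ψ n x * ψ m x) = if n = m then 1 else 0)
    (hp : ∀ n, (p n).Monic ∧ (p n).natDegree = n) (hs : ∀ n, s n ≠ 0)
    (hψ : ∀ n x, ψ n x = eval x (p n) * Complex.exp (-(eval x V) / 2) / s n)
    (hQ : ∀ n m, n + 1 < m → Q n m = 0)
    (hx : ∀ n x, x * ψ n x = ∑ k ∈ range (n + 2), Q n k * ψ k x) {n m : ℕ} (h : n ≤ m) :
    I (fun x => deriv (ψ n) x * ψ m x) = -(1 / 2) * polyMat (derivative V) Q n m := by
  have hderiv : (fun x => deriv (ψ n) x * ψ m x)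
      = (fun x => eval x (C (s n)⁻¹ * derivative (p n)) * Complex.exp (-(eval x V) / 2) * ψ m x)
        + (-(1 / 2) : ℂ) • fun x => eval x (derivative V) * ψ n x * ψ m x := by
    ext x
    rw [funext (hψ n), ((hasDerivAt_eval_mul_exp (p n) V x).div_const (s n)).deriv]
    simp only [Pi.add_apply, Pi.smul_apply, smul_eq_mul, eval_mul, eval_C]
    ring
  have hdeg : (C (s n)⁻¹ * derivative (p n)).degree < m := by
    rw [degree_C_mul (inv_ne_zero (hs n))]
    refine (degree_derivative_lt (hp n).1.ne_zero).trans_le ?_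
    rw [degree_eq_natDegree (hp n).1.ne_zero, (hp n).2]
    exact_mod_cast h
  rw [hderiv, map_add, map_smul, apply_eval_mul_eq_zero_of_degree_lt horth hp hs hψ hdeg,
    apply_eval_mul_mul_eq_polyMat horth hQ hx, smul_eq_mul, zero_add]

theorem stmt7_general (V : Polynomial ℂ)
    (I : (ℂ → ℂ) →ₗ[ℂ] ℂ)
    (p : ℕ → Polynomial ℂ) (hp : ∀ n, (p n).Monic ∧ (p n).natDegree = n)
    (s : ℕ → ℂ) (hs : ∀ n, s n ≠ 0)
    (ψ : ℕ → ℂ → ℂ)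
    (hψ : ∀ n x, ψ n x = eval x (p n) * Complex.exp (-(eval x V) / 2) / s n)
    (horth : ∀ n m, I (fun x => ψ n x * ψ m x) = if n = m then 1 else 0)
    (Q : ℕ → ℕ → ℂ) (hQ : ∀ n m, Q n m = I (fun x => x * ψ n x * ψ m x))
    (P : ℕ → ℕ → ℂ) (hP : ∀ n m, P n m = I (fun x => deriv (ψ n) x * ψ m x))
    (hanti : ∀ n m, P n m + P m n = 0) :
    ∀ n m : ℕ,
      P n m =
        -(1 / 2) * ((if n < m then polyMat (derivative V) Q n m else 0)
          - (if m < n then polyMat (derivative V) Q n m else 0)) := by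
  have hband : ∀ n m, n + 1 < m → Q n m = 0 := fun _ _ => jacobi_eq_zero_of_lt horth hp hs hψ hQ
  have hx := mul_eq_sum_jacobi horth hp hs hψ hQ
  have hupper : ∀ {n m}, n ≤ m → P n m = -(1 / 2) * polyMat (derivative V) Q n m :=
    fun h => (hP _ _).trans (apply_deriv_mul_eq_polyMat_of_le horth hp hs hψ hband hx h)
  intro n m
  rcases lt_trichotomy n m with h | rfl | h
  · rw [if_pos h, if_neg h.not_gt, hupper h.le, sub_zero]
  · simp only [lt_irrefl, if_false, sub_zero, mul_zero]
    linear_combination hanti n n / 2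
  · rw [if_neg h.not_gt, if_pos h, zero_sub, polyMat_symm horth hband hx]
    linear_combination hanti n m - hupper h.le

theorem stmt7 (d : ℕ) (V : Polynomial ℂ) (hV : V.natDegree = d + 1)
    (I : (ℂ → ℂ) →ₗ[ℂ] ℂ)
    (p : ℕ → Polynomial ℂ) (hp : ∀ n, (p n).Monic ∧ (p n).natDegree = n)
    (s : ℕ → ℂ) (hs : ∀ n, s n ≠ 0)
    (ψ : ℕ → ℂ → ℂ)
    (hψ : ∀ n x, ψ n x = eval x (p n) * Complex.exp (-(eval x V) / 2) / s n)
    (horth : ∀ n m, I (fun x => ψ n x * ψ m x) = if n = m then 1 else 0)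
    (Q : ℕ → ℕ → ℂ) (hQ : ∀ n m, Q n m = I (fun x => x * ψ n x * ψ m x))
    (P : ℕ → ℕ → ℂ) (hP : ∀ n m, P n m = I (fun x => deriv (ψ n) x * ψ m x))
    (hanti : ∀ n m, P n m + P m n = 0) :
    ∀ n m : ℕ,
      P n m =
        -(1 / 2) * ((if n < m then polyMat (derivative V) Q n m else 0)
          - (if m < n then polyMat (derivative V) Q n m else 0)) :=
  stmt7_general V I p hp s hs ψ hψ horth Q hQ P hP hanti
end

section
/- The string equations hold: for all n, (V'(Q))_{nn} = 0 and (V'(Q))_{n,n-1} = n/γ_n, where Q is the Jacobi matrix of the orthonormal quasi-polynomials. -/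
open Polynomial

/-!
Write `w = exp (-V / 2)`, so that `ψ n = p n * w / s n`. Since the `p k` are monic of degree `k`,
`q * w` lies in the span of `ψ 0, …, ψ N` whenever `deg q ≤ N`; hence `I (q w ψ m) = q_m s m`
for `deg q ≤ m`, and inserting `∑ₖ ψ k ⊗ ψ k` between factors shows that `W(Q)` has entries
`I (W ψ n ψ m)`, a symmetric matrix. Differentiating `ψ n` gives
`P n m = (p n)'_m s m / s n - V'(Q) n m / 2` for `n ≤ m + 1`. Antisymmetry of `P` on the diagonal
gives `V'(Q) n n = 0`; at `(n, n - 1)` it gives `V'(Q) n (n - 1) = n s (n - 1) / s n`, and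
`Q n (n - 1) = s n / s (n - 1)`.
-/

open Finset

namespace Polynomial

variable {R : Type*} [CommRing R] {p : ℕ → R[X]}

theorem coeff_self_of_monic (hp : ∀ n, (p n).Monic ∧ (p n).natDegree = n) (n : ℕ) :
    (p n).coeff n = 1 := by
  simpa only [(hp n).2] using (hp n).1.coeff_natDegree

theorem exists_eq_sum_smul_of_monic (hp : ∀ n, (p n).Monic ∧ (p n).natDegree = n) :
    ∀ (N : ℕ) (q : R[X]), q.natDegree ≤ N → ∃ c : ℕ → R, q = ∑ k ∈ range (N + 1), c k • p k
  | 0, q, hq => by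
    refine ⟨fun _ => q.coeff 0, ?_⟩
    conv_lhs => rw [eq_C_of_natDegree_le_zero hq]
    simp [(hp 0).1.natDegree_eq_zero.mp (hp 0).2, smul_eq_C_mul]
  | N + 1, q, hq => by
    set a := q.coeff (N + 1)
    have hr : (q - a • p (N + 1)).natDegree ≤ N := by
      refine natDegree_le_pred (n := N + 1) ?_ (by simp [a, coeff_self_of_monic hp])
      refine (natDegree_sub_le _ _).trans (max_le hq ?_)
      exact (natDegree_smul_le _ _).trans (hp (N + 1)).2.le
    obtain ⟨c, hc⟩ := exists_eq_sum_smul_of_monic hp N _ hr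
    refine ⟨Function.update c (N + 1) a, ?_⟩
    rw [sum_range_succ, Function.update_self,
      sum_congr rfl fun k hk => by rw [Function.update_of_ne (by simp at hk; omega)], ← hc]
    ring

theorem coeff_sum_smul_of_monic (hp : ∀ n, (p n).Monic ∧ (p n).natDegree = n) (c : ℕ → R)
    (N : ℕ) : (∑ k ∈ range (N + 1), c k • p k).coeff N = c N := by
  rw [finsetSum_coeff, sum_range_succ, sum_eq_zero fun k hk => ?_]
  · simp [coeff_self_of_monic hp]
  · rw [coeff_smul, coeff_eq_zero_of_natDegree_lt (by simp [(hp k).2] at hk ⊢; omega), smul_zero]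

end Polynomial

section Orthonormal

variable {I : (ℂ → ℂ) →ₗ[ℂ] ℂ} {ψ : ℕ → ℂ → ℂ} {S : Finset ℕ} {c : ℕ → ℂ} {F : ℂ → ℂ}

theorem map_mul_eq_sum_of_eq_sum (hF : ∀ x, F x = ∑ k ∈ S, c k * ψ k x) (G : ℂ → ℂ) :
    I (fun x => F x * G x) = ∑ k ∈ S, c k * I (fun x => ψ k x * G x) := by
  have : (fun x => F x * G x) = ∑ k ∈ S, c k • fun x => ψ k x * G x := by
    funext x
    simp [hF, sum_mul, mul_assoc]
  simp [this]

theorem map_mul_psi_of_eq_sum (horth : ∀ n m, I (fun x => ψ n x * ψ m x) = if n = m then 1 else 0)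
    (hF : ∀ x, F x = ∑ k ∈ S, c k * ψ k x) (m : ℕ) :
    I (fun x => F x * ψ m x) = if m ∈ S then c m else 0 := by
  simp [map_mul_eq_sum_of_eq_sum hF, horth]

theorem sum_map_mul_psi_mul_map_psi_mul
    (horth : ∀ n m, I (fun x => ψ n x * ψ m x) = if n = m then 1 else 0)
    (hF : ∀ x, F x = ∑ k ∈ S, c k * ψ k x) (G : ℂ → ℂ) :
    ∑ k ∈ S, I (fun x => F x * ψ k x) * I (fun x => ψ k x * G x) = I (fun x => F x * G x) := by
  rw [map_mul_eq_sum_of_eq_sum hF]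
  exact sum_congr rfl fun k hk => by rw [map_mul_psi_of_eq_sum horth hF, if_pos hk]

end Orthonormal

section Weighted

variable {I : (ℂ → ℂ) →ₗ[ℂ] ℂ} {w : ℂ → ℂ} {p : ℕ → ℂ[X]} {s : ℕ → ℂ} {ψ : ℕ → ℂ → ℂ}

theorem exists_eval_mul_eq_sum_psi (hp : ∀ n, (p n).Monic ∧ (p n).natDegree = n)
    (hs : ∀ n, s n ≠ 0) (hψ : ∀ n x, ψ n x = eval x (p n) * w x / s n) {q : ℂ[X]} {N : ℕ}
    (hq : q.natDegree ≤ N) :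
    ∃ c : ℕ → ℂ, (∀ x, eval x q * w x = ∑ k ∈ range (N + 1), c k * ψ k x) ∧
      c N = q.coeff N * s N := by
  obtain ⟨c, rfl⟩ := exists_eq_sum_smul_of_monic hp N q hq
  refine ⟨fun k => c k * s k, fun x => ?_, by rw [coeff_sum_smul_of_monic hp]⟩
  simp only [eval_finsetSum, eval_smul, smul_eq_mul, sum_mul, hψ]
  exact sum_congr rfl fun k _ => by field_simp [hs k]

theorem map_eval_mul_mul_psi (horth : ∀ n m, I (fun x => ψ n x * ψ m x) = if n = m then 1 else 0)
    (hp : ∀ n, (p n).Monic ∧ (p n).natDegree = n) (hs : ∀ n, s n ≠ 0)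
    (hψ : ∀ n x, ψ n x = eval x (p n) * w x / s n) {q : ℂ[X]} {m : ℕ} (hq : q.natDegree ≤ m) :
    I (fun x => eval x q * w x * ψ m x) = q.coeff m * s m := by
  obtain ⟨c, hc, hcm⟩ := exists_eval_mul_eq_sum_psi hp hs hψ hq
  rw [map_mul_psi_of_eq_sum horth hc, if_pos (self_mem_range_succ m), hcm]

theorem map_eval_mul_psi_mul_psi (hψ : ∀ n x, ψ n x = eval x (p n) * w x / s n) (q : ℂ[X])
    (n m : ℕ) :
    I (fun x => eval x q * ψ n x * ψ m x) = I (fun x => eval x (q * p n) * w x * ψ m x) / s n := by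
  rw [div_eq_inv_mul, ← smul_eq_mul, ← map_smul]
  congr 1
  funext x
  simp only [hψ n, eval_mul, Pi.smul_apply, smul_eq_mul]
  ring

theorem map_mul_psi_mul_psi_succ
    (horth : ∀ n m, I (fun x => ψ n x * ψ m x) = if n = m then 1 else 0)
    (hp : ∀ n, (p n).Monic ∧ (p n).natDegree = n) (hs : ∀ n, s n ≠ 0)
    (hψ : ∀ n x, ψ n x = eval x (p n) * w x / s n) (k : ℕ) :
    I (fun x => x * ψ k x * ψ (k + 1) x) = s (k + 1) / s k := by
  have hdeg : (X * p k).natDegree ≤ k + 1 := by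
    grw [natDegree_mul_le, natDegree_X, (hp k).2]
    omega
  have h := map_eval_mul_psi_mul_psi (I := I) hψ X k (k + 1)
  simp only [eval_X] at h
  rw [h, map_eval_mul_mul_psi horth hp hs hψ hdeg, coeff_X_mul, coeff_self_of_monic hp, one_mul]

variable {Q : ℕ → ℕ → ℂ}

theorem matPow_eq_map_pow_mul_psi_mul_psi
    (horth : ∀ n m, I (fun x => ψ n x * ψ m x) = if n = m then 1 else 0)
    (hp : ∀ n, (p n).Monic ∧ (p n).natDegree = n) (hs : ∀ n, s n ≠ 0)
    (hψ : ∀ n x, ψ n x = eval x (p n) * w x / s n)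
    (hQ : ∀ n m, Q n m = I (fun x => x * ψ n x * ψ m x)) (K n m : ℕ) :
    matPow Q K n m = I (fun x => x ^ K * ψ n x * ψ m x) := by
  induction K generalizing m with
  | zero => simp [matPow, horth]
  | succ K ih =>
    have hdeg : (X ^ K * p n).natDegree ≤ n + K + 1 := by
      grw [natDegree_mul_le, natDegree_X_pow, (hp n).2]
      omega
    obtain ⟨c, hc, -⟩ := exists_eval_mul_eq_sum_psi hp hs hψ hdeg
    have hF : ∀ x, x ^ K * ψ n x = ∑ k ∈ range (n + K + 2), c k / s n * ψ k x := fun x =>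
      calc x ^ K * ψ n x = eval x (X ^ K * p n) * w x / s n := by
            simp [hψ, mul_div_assoc', mul_assoc]
        _ = _ := by rw [hc, sum_div]; exact sum_congr rfl fun k _ => by ring
    calc matPow Q (K + 1) n m
        = ∑ k ∈ range (n + K + 2),
            I (fun x => x ^ K * ψ n x * ψ k x) * I (fun x => ψ k x * (x * ψ m x)) := by
          simp only [matPow, ih, hQ]
          exact sum_congr rfl fun k _ => by congr 2; funext x; ring
      _ = I (fun x => x ^ (K + 1) * ψ n x * ψ m x) := by
          rw [sum_map_mul_psi_mul_map_psi_mul horth hF]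
          congr 1
          funext x
          ring

theorem polyMat_eq_map_eval_mul_psi_mul_psi
    (horth : ∀ n m, I (fun x => ψ n x * ψ m x) = if n = m then 1 else 0)
    (hp : ∀ n, (p n).Monic ∧ (p n).natDegree = n) (hs : ∀ n, s n ≠ 0)
    (hψ : ∀ n x, ψ n x = eval x (p n) * w x / s n)
    (hQ : ∀ n m, Q n m = I (fun x => x * ψ n x * ψ m x)) (W : ℂ[X]) (n m : ℕ) :
    polyMat W Q n m = I (fun x => eval x W * ψ n x * ψ m x) := by
  have : (fun x => eval x W * ψ n x * ψ m x) =
      ∑ K ∈ range (W.natDegree + 1), W.coeff K • fun x => x ^ K * ψ n x * ψ m x := by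
    funext x
    simp [eval_eq_sum_range, sum_mul, mul_assoc]
  simp [polyMat, this, matPow_eq_map_pow_mul_psi_mul_psi horth hp hs hψ hQ]

end Weighted

section Gaussian

variable {I : (ℂ → ℂ) →ₗ[ℂ] ℂ} {V : ℂ[X]} {p : ℕ → ℂ[X]} {s : ℕ → ℂ} {ψ : ℕ → ℂ → ℂ}

theorem deriv_psi (hψ : ∀ n x, ψ n x = eval x (p n) * Complex.exp (-(eval x V) / 2) / s n)
    (n : ℕ) (x : ℂ) :
    deriv (ψ n) x = eval x (derivative (p n)) * Complex.exp (-(eval x V) / 2) / s n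
      - eval x (derivative V) * ψ n x / 2 := by
  have h : HasDerivAt (ψ n) ((eval x (derivative (p n)) * Complex.exp (-(eval x V) / 2)
      + eval x (p n) * (Complex.exp (-(eval x V) / 2) * (-eval x (derivative V) / 2))) / s n)
      x := by
    rw [funext (hψ n)]
    exact (((p n).hasDerivAt x).mul ((V.hasDerivAt x).neg.div_const 2).cexp).div_const (s n)
  rw [h.deriv, hψ]
  ring

theorem map_deriv_psi_mul_psi_of_le
    (horth : ∀ n m, I (fun x => ψ n x * ψ m x) = if n = m then 1 else 0)
    (hp : ∀ n, (p n).Monic ∧ (p n).natDegree = n) (hs : ∀ n, s n ≠ 0)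
    (hψ : ∀ n x, ψ n x = eval x (p n) * Complex.exp (-(eval x V) / 2) / s n) {n m : ℕ}
    (hnm : n ≤ m + 1) :
    I (fun x => deriv (ψ n) x * ψ m x) = (derivative (p n)).coeff m * s m / s n
      - I (fun x => eval x (derivative V) * ψ n x * ψ m x) / 2 := by
  have hdeg : (derivative (p n)).natDegree ≤ m := by
    grw [natDegree_derivative_le, (hp n).2]
    omega
  rw [← map_eval_mul_mul_psi horth hp hs hψ hdeg, div_eq_inv_mul, div_eq_inv_mul, ← smul_eq_mul,
    ← map_smul, ← smul_eq_mul (2 : ℂ)⁻¹, ← map_smul, ← map_sub]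
  congr 1
  funext x
  simp only [deriv_psi hψ, Pi.smul_apply, Pi.sub_apply, smul_eq_mul]
  ring

end Gaussian

theorem stmt8_general (V : Polynomial ℂ)
    (I : (ℂ → ℂ) →ₗ[ℂ] ℂ)
    (p : ℕ → Polynomial ℂ) (hp : ∀ n, (p n).Monic ∧ (p n).natDegree = n)
    (s : ℕ → ℂ) (hs : ∀ n, s n ≠ 0)
    (ψ : ℕ → ℂ → ℂ)
    (hψ : ∀ n x, ψ n x = eval x (p n) * Complex.exp (-(eval x V) / 2) / s n)
    (horth : ∀ n m, I (fun x => ψ n x * ψ m x) = if n = m then 1 else 0)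
    (Q : ℕ → ℕ → ℂ) (hQ : ∀ n m, Q n m = I (fun x => x * ψ n x * ψ m x))
    (P : ℕ → ℕ → ℂ) (hP : ∀ n m, P n m = I (fun x => deriv (ψ n) x * ψ m x))
    (hanti : ∀ n m, P n m + P m n = 0) :
    (∀ n : ℕ, polyMat (derivative V) Q n n = 0) ∧
      ∀ n : ℕ, 1 ≤ n →
        polyMat (derivative V) Q n (n - 1) = (n : ℂ) / Q n (n - 1) := by
  simp only [polyMat_eq_map_eval_mul_psi_mul_psi horth hp hs hψ hQ]
  set W : ℕ → ℕ → ℂ := fun n m => I (fun x => eval x (derivative V) * ψ n x * ψ m x)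
  have hW_symm : ∀ n m, W n m = W m n := fun n m => by
    simp only [W]
    congr 1
    funext x
    ring
  have hPW : ∀ n m, n ≤ m + 1 → P n m = (derivative (p n)).coeff m * s m / s n - W n m / 2 :=
    fun n m h => by rw [hP]; exact map_deriv_psi_mul_psi_of_le horth hp hs hψ h
  have hcoeff : ∀ n m, n ≤ m → (p n).coeff (m + 1) = 0 := fun n m h =>
    coeff_eq_zero_of_natDegree_lt (by rw [(hp n).2]; omega)
  refine ⟨fun n => ?_, fun n hn => ?_⟩
  · have h := hanti n n
    rw [hPW n n (by omega), coeff_derivative, hcoeff n n le_rfl] at h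
    linear_combination -h
  · obtain ⟨k, rfl⟩ : ∃ k, n = k + 1 := ⟨n - 1, by omega⟩
    have h := hanti (k + 1) k
    rw [hPW _ _ le_rfl, hPW _ _ (by omega), coeff_derivative, coeff_derivative,
      coeff_self_of_monic hp, hcoeff k (k + 1) (by omega), hW_symm k] at h
    have hQ_succ : Q (k + 1) k = s (k + 1) / s k := by
      rw [hQ, ← map_mul_psi_mul_psi_succ horth hp hs hψ]
      congr 1
      funext x
      ring
    rw [Nat.add_sub_cancel, hQ_succ, div_div_eq_mul_div]
    push_cast
    linear_combination -h

theorem stmt8 (d : ℕ) (V : Polynomial ℂ) (hV : V.natDegree = d + 1)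
    (I : (ℂ → ℂ) →ₗ[ℂ] ℂ)
    (p : ℕ → Polynomial ℂ) (hp : ∀ n, (p n).Monic ∧ (p n).natDegree = n)
    (s : ℕ → ℂ) (hs : ∀ n, s n ≠ 0)
    (ψ : ℕ → ℂ → ℂ)
    (hψ : ∀ n x, ψ n x = eval x (p n) * Complex.exp (-(eval x V) / 2) / s n)
    (horth : ∀ n m, I (fun x => ψ n x * ψ m x) = if n = m then 1 else 0)
    (Q : ℕ → ℕ → ℂ) (hQ : ∀ n m, Q n m = I (fun x => x * ψ n x * ψ m x))
    (P : ℕ → ℕ → ℂ) (hP : ∀ n m, P n m = I (fun x => deriv (ψ n) x * ψ m x))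
    (hanti : ∀ n m, P n m + P m n = 0) :
    (∀ n : ℕ, polyMat (derivative V) Q n n = 0) ∧
      ∀ n : ℕ, 1 ≤ n →
        polyMat (derivative V) Q n (n - 1) = (n : ℂ) / Q n (n - 1) :=
  stmt8_general V I p hp s hs ψ hψ horth Q hQ P hP hanti
end

section
/- If Q is a symmetric tridiagonal semi-infinite matrix, then for the power Q^{K+1} the strictly upper triangular part satisfies (Q^{K+1})_+ = (Q^K)_+ Q + (Q^K)_0 Q_1 - (Q^K)_1 Q_{-1}, where A_l denotes the l-th diagonal of A, Q_1 and Q_{-1} the super- and sub-diagonal parts of Q, and Q_0 its diagonal part. -/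
/-- Strictly upper triangular part of a semi-infinite matrix. -/
def up (A : ℕ → ℕ → ℂ) (n m : ℕ) : ℂ := if n < m then A n m else 0

/-- The part of a semi-infinite matrix supported on the `l`-th diagonal. -/
def dg (A : ℕ → ℕ → ℂ) (l : ℤ) (n m : ℕ) : ℂ := if (m : ℤ) - n = l then A n m else 0

/-- Entry of the product of two banded semi-infinite matrices (`b` is any
sufficiently large band bound). -/
noncomputable def mulE (A B : ℕ → ℕ → ℂ) (b : ℕ) (n m : ℕ) : ℂ :=
  ∑ k ∈ Finset.range (max n m + b + 1), A n k * B k m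

theorem stmt12 (Q : ℕ → ℕ → ℂ)
    (htri : ∀ n m : ℕ, 1 < ((n : ℤ) - m).natAbs → Q n m = 0) (K : ℕ) :
    ∀ n m : ℕ,
      up (matPow Q (K + 1)) n m =
        mulE (up (matPow Q K)) Q (K + 3) n m
          + mulE (dg (matPow Q K) 0) (dg Q 1) (K + 3) n m
          - mulE (dg (matPow Q K) 1) (dg Q (-1)) (K + 3) n m := by
  have band : ∀ K n m : ℕ, K < ((n : ℤ) - m).natAbs → matPow Q K n m = 0 := by
    intro K
    induction K with
    | zero =>
      intro n m h
      simp only [matPow, ite_eq_right_iff]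
      intro hnm; omega
    | succ K ih =>
      intro n m h
      simp only [matPow]
      apply Finset.sum_eq_zero
      intro k _
      by_cases hk : K < ((n : ℤ) - k).natAbs
      · rw [ih n k hk, zero_mul]
      · rw [htri k m (by omega), mul_zero]
  intro n m
  have hL : up (matPow Q (K + 1)) n m
      = ∑ k ∈ Finset.range (max n m + (K + 3) + 1),
          (if n < m then matPow Q K n k * Q k m else 0) := by
    by_cases h : n < m
    · simp only [up, if_pos h, matPow]
      refine Finset.sum_subset (Finset.range_subset_range.mpr (by omega)) ?_
      intro k _ hk
      rw [band K n k (by simp only [Finset.mem_range] at hk; omega), zero_mul]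
    · simp [up, h]
  rw [hL]
  simp only [mulE, up, dg]
  rw [← Finset.sum_add_distrib, ← Finset.sum_sub_distrib]
  apply Finset.sum_congr rfl
  intro k _
  split_ifs <;>
    (first
      | (exfalso; omega)
      | (rw [htri k m (by omega)]; ring)
      | ring)
end

section
/- The deformation matrices U_K defined by ∂ψ_n/∂u_K = ∑_m (U_K)_{nm} ψ_m are antisymmetric and given by U_K = -(1/(2K))((Q^K)_+ - (Q^K)_-). -/
/-
Differentiating `∫ ψ_n ψ_m = δ_{nm}` in `t` gives `U + Uᵀ = 0`. The only `t`-dependence of the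
weight is `e^{-t x^K / (2K)}`, so `∂ψ_n = -(1/(2K)) x^K ψ_n + r_n e^{-V/2}` with `deg r_n ≤ n`.
Because `p_0, …, p_d` span the polynomials of degree `≤ d`, the term `r_n e^{-V/2}` lies in the
span of `ψ_0, …, ψ_n` and is orthogonal to `ψ_m` for `m > n`, leaving
`U_{nm} = -(1/(2K)) ∫ x^K ψ_n ψ_m`. Expanding `x^J ψ_n` in the orthonormal family identifies these
moments with the entries of `Q^K`, which are therefore symmetric; antisymmetry of `U` gives the
lower triangle.
-/

open Polynomial

section OrthonormalExpansion

variable {𝕜 α : Type*} [CommSemiring 𝕜] (I : (α → 𝕜) →ₗ[𝕜] 𝕜) {ψ : ℕ → α → 𝕜}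

theorem eq_sum_smul_of_mem_span (horth : ∀ n m, I (ψ n * ψ m) = if n = m then 1 else 0)
    {d : ℕ} {f : α → 𝕜} (hf : f ∈ Submodule.span 𝕜 (ψ '' Set.Iio d)) :
    f = ∑ k ∈ Finset.range d, I (f * ψ k) • ψ k := by
  let P : (α → 𝕜) →ₗ[𝕜] (α → 𝕜) :=
    ∑ k ∈ Finset.range d, LinearMap.smulRight (I ∘ₗ LinearMap.mulRight 𝕜 (ψ k)) (ψ k)
  have hP : Set.EqOn (LinearMap.id (R := 𝕜)) P (ψ '' Set.Iio d) := by
    rintro _ ⟨j, hj, rfl⟩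
    simp [P, horth, Set.mem_Iio.mp hj]
  simpa [P] using LinearMap.eqOn_span' hP hf

theorem pairing_eq_sum_of_mem_span (horth : ∀ n m, I (ψ n * ψ m) = if n = m then 1 else 0)
    {d : ℕ} {f : α → 𝕜} (hf : f ∈ Submodule.span 𝕜 (ψ '' Set.Iio d)) (g : α → 𝕜) :
    I (f * g) = ∑ k ∈ Finset.range d, I (f * ψ k) * I (ψ k * g) := by
  conv_lhs => rw [eq_sum_smul_of_mem_span I horth hf]
  simp only [Finset.sum_mul, map_sum, smul_mul_assoc, map_smul, smul_eq_mul]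

theorem pairing_eq_zero_of_mem_span (horth : ∀ n m, I (ψ n * ψ m) = if n = m then 1 else 0)
    {d m : ℕ} {f : α → 𝕜} (hf : f ∈ Submodule.span 𝕜 (ψ '' Set.Iio d)) (hdm : d ≤ m) :
    I (f * ψ m) = 0 := by
  rw [pairing_eq_sum_of_mem_span I horth hf]
  refine Finset.sum_eq_zero fun k hk => ?_
  rw [horth, if_neg (by grind), mul_zero]

end OrthonormalExpansion

section WeightedPolynomial

variable {𝕜 : Type*} [Field 𝕜]

def weightedEval (w : 𝕜 → 𝕜) : 𝕜[X] →ₗ[𝕜] (𝕜 → 𝕜) where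
  toFun q x := eval x q * w x
  map_add' q r := by ext; simp [add_mul]
  map_smul' c q := by ext; simp [mul_assoc]

theorem weightedEval_apply (w : 𝕜 → 𝕜) (q : 𝕜[X]) (x : 𝕜) :
    weightedEval w q x = eval x q * w x :=
  rfl

theorem weightedEval_mem_span {p : ℕ → 𝕜[X]} (hp : ∀ n, (p n).Monic ∧ (p n).natDegree = n)
    {s : ℕ → 𝕜} (hs : ∀ n, s n ≠ 0) {w : 𝕜 → 𝕜} {ψ : ℕ → 𝕜 → 𝕜}
    (hψ : ∀ n x, ψ n x = eval x (p n) * w x / s n) {q : 𝕜[X]} {d : ℕ} (hq : q.natDegree < d) :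
    weightedEval w q ∈ Submodule.span 𝕜 (ψ '' Set.Iio d) := by
  let S : Sequence 𝕜 := ⟨p, fun n => by rw [degree_eq_natDegree (hp n).1.ne_zero, (hp n).2]⟩
  have hq' : q ∈ Submodule.span 𝕜 (S '' Set.Iio d) := by
    rw [S.span_degreeLT fun n _ => by simp [S, (hp n).1.leadingCoeff], mem_degreeLT]
    exact (degree_le_natDegree).trans_lt (by exact_mod_cast hq)
  have hmap := Submodule.mem_map_of_mem (f := weightedEval w) hq'
  rw [Submodule.map_span, ← Set.image_comp] at hmap
  refine Submodule.span_le.mpr ?_ hmap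
  rintro _ ⟨n, hn, rfl⟩
  have hpn : weightedEval w (p n) = s n • ψ n := by
    ext x
    simp [weightedEval_apply, hψ, mul_div_cancel₀ _ (hs n)]
  have hψn : ψ n ∈ Submodule.span 𝕜 (ψ '' Set.Iio d) := Submodule.subset_span ⟨n, hn, rfl⟩
  simpa [S, hpn] using Submodule.smul_mem _ (s n) hψn

end WeightedPolynomial

theorem pairing_pow_mul_eq_matPow (I : (ℂ → ℂ) →ₗ[ℂ] ℂ) {p : ℕ → ℂ[X]}
    (hp : ∀ n, (p n).Monic ∧ (p n).natDegree = n) {s : ℕ → ℂ} (hs : ∀ n, s n ≠ 0)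
    {w : ℂ → ℂ} {ψ : ℕ → ℂ → ℂ} (hψ : ∀ n x, ψ n x = eval x (p n) * w x / s n)
    (horth : ∀ n m, I (ψ n * ψ m) = if n = m then 1 else 0)
    {Q : ℕ → ℕ → ℂ} (hQ : ∀ n m, Q n m = I (fun x => x * ψ n x * ψ m x)) (J n m : ℕ) :
    I (fun x => x ^ J * ψ n x * ψ m x) = matPow Q J n m := by
  induction J generalizing m with
  | zero =>
    simp only [pow_zero, one_mul]
    exact horth n m
  | succ J ih =>
    have hmem : (fun x => x ^ J * ψ n x) ∈ Submodule.span ℂ (ψ '' Set.Iio (n + J + 2)) := by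
      have hweighted :
          (fun x => x ^ J * ψ n x) = weightedEval w (C (s n)⁻¹ * X ^ J * p n) := by
        ext x
        simp only [weightedEval_apply, eval_mul, eval_C, eval_pow, eval_X, hψ]
        ring
      rw [hweighted]
      refine weightedEval_mem_span hp hs hψ ?_
      calc (C (s n)⁻¹ * X ^ J * p n).natDegree ≤ J + n := by
            grw [natDegree_mul_le, natDegree_C_mul_le, natDegree_X_pow, (hp n).2]
        _ < n + J + 2 := by omega
    calc I (fun x => x ^ (J + 1) * ψ n x * ψ m x)
        = I ((fun x => x ^ J * ψ n x) * fun x => x * ψ m x) := by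
          congr 1; ext x; simp only [Pi.mul_apply]; ring
      _ = ∑ k ∈ Finset.range (n + J + 2),
            I ((fun x => x ^ J * ψ n x) * ψ k) * I (ψ k * fun x => x * ψ m x) :=
          pairing_eq_sum_of_mem_span I horth hmem _
      _ = matPow Q (J + 1) n m := by
          refine Finset.sum_congr rfl fun k _ => ?_
          rw [← ih, hQ]
          congr 2
          ext x
          simp only [Pi.mul_apply]
          ring

theorem matPow_symm (I : (ℂ → ℂ) →ₗ[ℂ] ℂ) {p : ℕ → ℂ[X]}
    (hp : ∀ n, (p n).Monic ∧ (p n).natDegree = n) {s : ℕ → ℂ} (hs : ∀ n, s n ≠ 0)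
    {w : ℂ → ℂ} {ψ : ℕ → ℂ → ℂ} (hψ : ∀ n x, ψ n x = eval x (p n) * w x / s n)
    (horth : ∀ n m, I (ψ n * ψ m) = if n = m then 1 else 0)
    {Q : ℕ → ℕ → ℂ} (hQ : ∀ n m, Q n m = I (fun x => x * ψ n x * ψ m x)) (J n m : ℕ) :
    matPow Q J n m = matPow Q J m n := by
  rw [← pairing_pow_mul_eq_matPow I hp hs hψ horth hQ,
    ← pairing_pow_mul_eq_matPow I hp hs hψ horth hQ]
  congr 1
  ext x
  ring

theorem pairing_deriv_antisymm (I : (ℂ → ℂ) →ₗ[ℂ] ℂ) {ψ : ℂ → ℕ → ℂ → ℂ} {t₀ : ℂ}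
    (horth : ∀ t n m, I (fun x => ψ t n x * ψ t m x) = if n = m then 1 else 0)
    (hder : ∀ n m, HasDerivAt (fun t => I (fun x => ψ t n x * ψ t m x))
      (I (fun x => deriv (fun t => ψ t n x) t₀ * ψ t₀ m x
            + ψ t₀ n x * deriv (fun t => ψ t m x) t₀)) t₀) (n m : ℕ) :
    I (fun x => deriv (fun t => ψ t n x) t₀ * ψ t₀ m x) =
      -I (fun x => deriv (fun t => ψ t m x) t₀ * ψ t₀ n x) := by
  have hconst : HasDerivAt (fun t => I (fun x => ψ t n x * ψ t m x)) 0 t₀ := by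
    simp only [horth]
    exact hasDerivAt_const _ _
  rw [eq_neg_iff_add_eq_zero, ← map_add, ← (hder n m).unique hconst]
  congr 1
  ext x
  simp only [Pi.add_apply]
  ring

theorem Polynomial.exists_hasDerivAt_eval {𝕜 : Type*} [NontriviallyNormedField 𝕜]
    {p : 𝕜 → 𝕜[X]} {n : ℕ} {t₀ : 𝕜} (hdeg : ∀ t, (p t).natDegree ≤ n)
    (hdiff : ∀ j, DifferentiableAt 𝕜 (fun t => (p t).coeff j) t₀) :
    ∃ r : 𝕜[X], r.natDegree ≤ n ∧ ∀ x, HasDerivAt (fun t => eval x (p t)) (eval x r) t₀ := by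
  refine ⟨∑ j ∈ Finset.range (n + 1), C (deriv (fun t => (p t).coeff j) t₀) * X ^ j, ?_,
    fun x => ?_⟩
  · refine natDegree_sum_le_of_forall_le _ _ fun j hj => ?_
    grw [natDegree_C_mul_le, natDegree_X_pow]
    exact Nat.lt_succ_iff.mp (Finset.mem_range.mp hj)
  · have hsum : (fun t => eval x (p t)) =
        fun t => ∑ j ∈ Finset.range (n + 1), (p t).coeff j * x ^ j := by
      funext t
      exact eval_eq_sum_range' (Nat.lt_succ_of_le (hdeg t)) x
    rw [hsum]
    simp only [eval_finsetSum, eval_mul, eval_C, eval_pow, eval_X]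
    exact HasDerivAt.fun_sum fun j _ => (hdiff j).hasDerivAt.mul_const _

theorem hasDerivAt_cexp_neg_half_eval (V₀ : ℂ[X]) (K : ℕ) (x t₀ : ℂ) :
    HasDerivAt (fun t : ℂ => Complex.exp (-(eval x (V₀ + C (t / K) * X ^ K)) / 2))
      (-(1 / (2 * K)) * x ^ K * Complex.exp (-(eval x (V₀ + C (t₀ / K) * X ^ K)) / 2)) t₀ := by
  have hexponent : HasDerivAt (fun t : ℂ => -(eval x (V₀ + C (t / K) * X ^ K)) / 2)
      (-(1 / (2 * K)) * x ^ K) t₀ := by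
    simp only [eval_add, eval_mul, eval_C, eval_pow, eval_X]
    exact (((((hasDerivAt_id' t₀).div_const (K : ℂ)).mul_const (x ^ K)).const_add
      (eval x V₀)).neg.div_const 2).congr_deriv (by ring)
  exact hexponent.cexp.congr_deriv (mul_comm _ _)

theorem exists_deriv_eq_neg_pow_mul_add_weightedEval {K : ℕ} {V₀ : ℂ[X]} {V : ℂ → ℂ[X]}
    (hV : ∀ t, V t = V₀ + C (t / K) * X ^ K) {p : ℂ → ℂ[X]} {n : ℕ} {t₀ : ℂ}
    (hdeg : ∀ t, (p t).natDegree ≤ n)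
    (hpdiff : ∀ j, DifferentiableAt ℂ (fun t => (p t).coeff j) t₀)
    {s : ℂ → ℂ} (hs : s t₀ ≠ 0) (hsdiff : DifferentiableAt ℂ s t₀) {φ : ℂ → ℂ → ℂ}
    (hφ : ∀ t x, φ t x = eval x (p t) * Complex.exp (-(eval x (V t)) / 2) / s t) :
    ∃ r : ℂ[X], r.natDegree ≤ n ∧ ∀ x, deriv (fun t => φ t x) t₀ =
      -(1 / (2 * K)) * (x ^ K * φ t₀ x) +
        weightedEval (fun x => Complex.exp (-(eval x (V t₀)) / 2)) r x := by
  obtain ⟨r, hr, hderiv⟩ := exists_hasDerivAt_eval (p := fun t => C (s t)⁻¹ * p t) (t₀ := t₀)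
    (fun t => (natDegree_C_mul_le _ _).trans (hdeg t))
    (fun j => by simp only [coeff_C_mul]; exact (hsdiff.inv hs).fun_mul (hpdiff j))
  refine ⟨r, hr, fun x => ?_⟩
  have hfactor : (fun t => φ t x) = fun t =>
      eval x (C (s t)⁻¹ * p t) * Complex.exp (-(eval x (V₀ + C (t / K) * X ^ K)) / 2) := by
    funext t
    rw [hφ, hV, eval_mul, eval_C]
    ring
  rw [hfactor, ((hderiv x).fun_mul (hasDerivAt_cexp_neg_half_eval V₀ K x t₀)).deriv, hφ, hV]
  simp only [weightedEval_apply, eval_mul, eval_C]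
  ring

theorem stmt14_general (K : ℕ)
    (I : (ℂ → ℂ) →ₗ[ℂ] ℂ) (t₀ : ℂ)
    (V₀ : Polynomial ℂ) (V : ℂ → Polynomial ℂ)
    (hVdef : ∀ t, V t = V₀ + C (t / K) * X ^ K)
    (p : ℂ → ℕ → Polynomial ℂ)
    (hp : ∀ t n, (p t n).Monic ∧ (p t n).natDegree = n)
    (hpdiff : ∀ n j, DifferentiableAt ℂ (fun t => (p t n).coeff j) t₀)
    (s : ℂ → ℕ → ℂ) (hs : ∀ t n, s t n ≠ 0)
    (hsdiff : ∀ n, DifferentiableAt ℂ (fun t => s t n) t₀)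
    (ψ : ℂ → ℕ → ℂ → ℂ)
    (hψ : ∀ t n x, ψ t n x =
      eval x (p t n) * Complex.exp (-(eval x (V t)) / 2) / s t n)
    (horth : ∀ t n m, I (fun x => ψ t n x * ψ t m x) = if n = m then 1 else 0)
    (hder : ∀ n m, HasDerivAt (fun t => I (fun x => ψ t n x * ψ t m x))
      (I (fun x => deriv (fun t => ψ t n x) t₀ * ψ t₀ m x
            + ψ t₀ n x * deriv (fun t => ψ t m x) t₀)) t₀)
    (Q : ℕ → ℕ → ℂ) (hQ : ∀ n m, Q n m = I (fun x => x * ψ t₀ n x * ψ t₀ m x))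
    (U : ℕ → ℕ → ℂ)
    (hU : ∀ n m, U n m = I (fun x => deriv (fun t => ψ t n x) t₀ * ψ t₀ m x)) :
    (∀ n m, U n m = -U m n) ∧
      ∀ n m, U n m = -(1 / (2 * K)) *
        ((if n < m then matPow Q K n m else 0) -
          (if m < n then matPow Q K n m else 0)) := by
  set w := fun x => Complex.exp (-(eval x (V t₀)) / 2)
  have hψ₀ : ∀ n x, ψ t₀ n x = eval x (p t₀ n) * w x / s t₀ n := hψ t₀
  have hanti : ∀ n m, U n m = -U m n := fun n m => by
    rw [hU, hU, pairing_deriv_antisymm I horth hder]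
  have hupper : ∀ n m, n < m → U n m = -(1 / (2 * K)) * matPow Q K n m := by
    intro n m hnm
    obtain ⟨r, hr, hderiv⟩ := exists_deriv_eq_neg_pow_mul_add_weightedEval hVdef
      (fun t => (hp t n).2.le) (hpdiff n) (hs t₀ n) (hsdiff n) (fun t => hψ t n)
    have hvanish : I (weightedEval w r * ψ t₀ m) = 0 :=
      pairing_eq_zero_of_mem_span I (horth t₀)
        (weightedEval_mem_span (hp t₀) (hs t₀) hψ₀ (Nat.lt_succ_of_le hr)) hnm
    rw [hU, ← pairing_pow_mul_eq_matPow I (hp t₀) (hs t₀) hψ₀ (horth t₀) hQ, ← add_zero (_ * _),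
      ← hvanish, ← smul_eq_mul, ← map_smul, ← map_add]
    congr 1
    ext x
    simp only [hderiv, Pi.add_apply, Pi.smul_apply, Pi.mul_apply, smul_eq_mul]
    ring
  have hsymm := matPow_symm I (hp t₀) (hs t₀) hψ₀ (horth t₀) hQ K
  refine ⟨hanti, fun n m => ?_⟩
  rcases lt_trichotomy n m with hnm | rfl | hmn
  · simp [hnm, hnm.not_gt, hupper n m hnm]
  · simpa using self_eq_neg.mp (hanti n n)
  · simp [hmn, hmn.not_gt, hanti n m, hupper m n hmn, hsymm m n]

theorem stmt14 (K : ℕ) (hK : 1 ≤ K)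
    (I : (ℂ → ℂ) →ₗ[ℂ] ℂ) (t₀ : ℂ)
    (V₀ : Polynomial ℂ) (V : ℂ → Polynomial ℂ)
    (hVdef : ∀ t, V t = V₀ + C (t / K) * X ^ K)
    (p : ℂ → ℕ → Polynomial ℂ)
    (hp : ∀ t n, (p t n).Monic ∧ (p t n).natDegree = n)
    (hpdiff : ∀ n j, DifferentiableAt ℂ (fun t => (p t n).coeff j) t₀)
    (s : ℂ → ℕ → ℂ) (hs : ∀ t n, s t n ≠ 0)
    (hsdiff : ∀ n, DifferentiableAt ℂ (fun t => s t n) t₀)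
    (ψ : ℂ → ℕ → ℂ → ℂ)
    (hψ : ∀ t n x, ψ t n x =
      eval x (p t n) * Complex.exp (-(eval x (V t)) / 2) / s t n)
    (horth : ∀ t n m, I (fun x => ψ t n x * ψ t m x) = if n = m then 1 else 0)
    (hder : ∀ n m, HasDerivAt (fun t => I (fun x => ψ t n x * ψ t m x))
      (I (fun x => deriv (fun t => ψ t n x) t₀ * ψ t₀ m x
            + ψ t₀ n x * deriv (fun t => ψ t m x) t₀)) t₀)
    (Q : ℕ → ℕ → ℂ) (hQ : ∀ n m, Q n m = I (fun x => x * ψ t₀ n x * ψ t₀ m x))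
    (U : ℕ → ℕ → ℂ)
    (hU : ∀ n m, U n m = I (fun x => deriv (fun t => ψ t n x) t₀ * ψ t₀ m x)) :
    (∀ n m, U n m = -U m n) ∧
      ∀ n m, U n m = -(1 / (2 * K)) *
        ((if n < m then matPow Q K n m else 0) -
          (if m < n then matPow Q K n m else 0)) :=
  stmt14_general K I t₀ V₀ V hVdef p hp hpdiff s hs hsdiff ψ hψ horth hder Q hQ U hU
end

section
/- Under the string equations (V'(Q))_{00} = 0 and (V'(Q))_{10} = 1/γ_1, the difference-quotient matrix W(x) = (V'(Q)-V'(x))/(Q-x) satisfies the identity W_{00}(x) = γ_1^2 W_{11}(x) W_{00}(x) - γ_1 W_{10}(x)(V'(x) + γ_1 W_{10}(x)). -/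
/-- Entry of the matrix-valued difference quotient
`W(x) = (V'(Q) - V'(x))/(Q - x) = ∑_{K=2}^{d+1} u_K ∑_{j=0}^{K-2} x^j Q^{K-2-j}`. -/
noncomputable def Wmat (d : ℕ) (u : ℕ → ℂ) (Q : ℕ → ℕ → ℂ) (x : ℂ) (n m : ℕ) : ℂ :=
  ∑ K ∈ Finset.Icc 2 (d + 1), u K *
    ∑ j ∈ Finset.range (K - 1), x ^ j * matPow Q (K - 2 - j) n m

/-! Row `1` of `W(x) (Q - x) = V'(Q) - V'(x)`, column `0`, reads `γ₁ (β₀ - x) W₁₀ + γ₁² W₁₁ = 1`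
by the second string equation, and row `0` reads `(β₀ - x) W₀₀ + γ₁ W₁₀ = -V'(x)` by the first
one (using `W₀₁ = W₁₀`, since `Q` and hence all its powers are symmetric). Multiplying the first
by `W₀₀` and the second by `γ₁ W₁₀` eliminates `β₀ - x`. -/

def IsTridiagonal (Q : ℕ → ℕ → ℂ) : Prop :=
  ∀ n m : ℕ, 1 < ((n : ℤ) - m).natAbs → Q n m = 0

/-- The `(n, m)` entry of `(Q ^ (K - 1) - x ^ (K - 1)) / (Q - x)`. -/
noncomputable def powDiffQuot (Q : ℕ → ℕ → ℂ) (x : ℂ) (K n m : ℕ) : ℂ :=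
  ∑ j ∈ Finset.range (K - 1), x ^ j * matPow Q (K - 2 - j) n m

lemma matPow_zero_apply (Q : ℕ → ℕ → ℂ) (n m : ℕ) :
    matPow Q 0 n m = if n = m then 1 else 0 := rfl

lemma matPow_succ_apply (Q : ℕ → ℕ → ℂ) (K n m : ℕ) :
    matPow Q (K + 1) n m = ∑ k ∈ Finset.range (n + K + 2), matPow Q K n k * Q k m := rfl

lemma matPow_one (Q : ℕ → ℕ → ℂ) (n m : ℕ) : matPow Q 1 n m = Q n m := by
  simp [matPow]

lemma Wmat_eq_sum_powDiffQuot (d : ℕ) (u : ℕ → ℂ) (Q : ℕ → ℕ → ℂ) (x : ℂ) (n m : ℕ) :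
    Wmat d u Q x n m = ∑ K ∈ Finset.Icc 1 (d + 1), u K * powDiffQuot Q x K n m := by
  refine Finset.sum_subset (Finset.Icc_subset_Icc_left one_le_two) fun K hK hK2 => ?_
  obtain rfl : K = 1 := by simp only [Finset.mem_Icc] at hK hK2; omega
  simp

namespace IsTridiagonal

variable {Q : ℕ → ℕ → ℂ} (hQ : IsTridiagonal Q)
include hQ

lemma matPow_eq_zero {K n m : ℕ} (h : K < ((n : ℤ) - m).natAbs) : matPow Q K n m = 0 := by
  induction K generalizing m with
  | zero => simp [matPow_zero_apply, show n ≠ m by omega]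
  | succ K ih =>
    refine Finset.sum_eq_zero fun k _ => ?_
    by_cases hk : K < ((n : ℤ) - k).natAbs
    · rw [ih hk, zero_mul]
    · rw [hQ k m (by omega), mul_zero]

lemma matPow_succ_eq_sum {K n N : ℕ} (m : ℕ) (hN : n + K + 2 ≤ N) :
    matPow Q (K + 1) n m = ∑ k ∈ Finset.range N, matPow Q K n k * Q k m :=
  (Finset.eventually_constant_sum
    (fun k hk => by rw [hQ.matPow_eq_zero (by omega), zero_mul]) hN).symm

lemma matPow_succ_apply_zero (K n : ℕ) :
    matPow Q (K + 1) n 0 = matPow Q K n 0 * Q 0 0 + matPow Q K n 1 * Q 1 0 := by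
  rw [matPow_succ_apply, Finset.eventually_constant_sum (N := 2)
    (fun k hk => by rw [hQ k 0 (by omega), mul_zero]) (by omega)]
  simp [Finset.sum_range_succ]

lemma matPow_succ_eq_sum_left (K : ℕ) {n N : ℕ} (m : ℕ) (hN : n + 2 ≤ N) :
    matPow Q (K + 1) n m = ∑ k ∈ Finset.range N, Q n k * matPow Q K k m := by
  induction K generalizing m with
  | zero =>
    rw [zero_add, matPow_one]
    simp only [matPow_zero_apply, mul_ite, mul_one, mul_zero,
      Finset.sum_ite_eq', Finset.mem_range]
    split_ifs with hm
    · rfl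
    · exact hQ n m (by omega)
  | succ K ih =>
    calc matPow Q (K + 2) n m
        = ∑ l ∈ Finset.range (N + K + 1), matPow Q (K + 1) n l * Q l m :=
          hQ.matPow_succ_eq_sum m (by omega)
      _ = ∑ l ∈ Finset.range (N + K + 1), ∑ k ∈ Finset.range N,
            Q n k * matPow Q K k l * Q l m := by
          simp only [ih, Finset.sum_mul]
      _ = ∑ k ∈ Finset.range N, Q n k * matPow Q (K + 1) k m := by
          rw [Finset.sum_comm]
          refine Finset.sum_congr rfl fun k hk => ?_
          rw [hQ.matPow_succ_eq_sum m (N := N + K + 1) (by have := Finset.mem_range.1 hk; omega), Finset.mul_sum]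
          simp only [mul_assoc]

lemma matPow_symm (hsymm : ∀ n m, Q n m = Q m n) (K n m : ℕ) :
    matPow Q K n m = matPow Q K m n := by
  induction K generalizing n m with
  | zero => simp [matPow_zero_apply, eq_comm]
  | succ K ih =>
    rw [hQ.matPow_succ_eq_sum_left K m (N := n + m + K + 2) (by omega),
      hQ.matPow_succ_eq_sum n (N := n + m + K + 2) (by omega)]
    exact Finset.sum_congr rfl fun k _ => by rw [ih m k, hsymm k n, mul_comm]

lemma powDiffQuot_mul_sub_apply_zero (x : ℂ) (K n : ℕ) :
    powDiffQuot Q x K n 0 * Q 0 0 + powDiffQuot Q x K n 1 * Q 1 0 - x * powDiffQuot Q x K n 0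
      = matPow Q (K - 1) n 0 - x ^ (K - 1) * matPow Q 0 n 0 := by
  set L := K - 1
  have hL : ∀ j, K - 2 - j = L - 1 - j := fun j => by omega
  simp only [powDiffQuot, hL, Finset.sum_mul, Finset.mul_sum, ← Finset.sum_add_distrib,
    ← Finset.sum_sub_distrib]
  have htelescope := Finset.sum_range_sub' (fun j => x ^ j * matPow Q (L - j) n 0) L
  simp only [pow_zero, one_mul, Nat.sub_zero, Nat.sub_self] at htelescope
  rw [← htelescope]
  refine Finset.sum_congr rfl fun j hj => ?_
  obtain ⟨i, hi⟩ : ∃ i, L - j = i + 1 := ⟨L - 1 - j, by have := Finset.mem_range.1 hj; omega⟩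
  rw [hi, show L - (j + 1) = i by omega, show L - 1 - j = i by omega, hQ.matPow_succ_apply_zero]
  ring

lemma Wmat_mul_sub_apply_zero (d : ℕ) (u : ℕ → ℂ) (x : ℂ) (n : ℕ) :
    Wmat d u Q x n 0 * Q 0 0 + Wmat d u Q x n 1 * Q 1 0 - x * Wmat d u Q x n 0
      = ∑ K ∈ Finset.Icc 1 (d + 1), u K * matPow Q (K - 1) n 0
        - (∑ K ∈ Finset.Icc 1 (d + 1), u K * x ^ (K - 1)) * matPow Q 0 n 0 := by
  simp only [Wmat_eq_sum_powDiffQuot, Finset.sum_mul, Finset.mul_sum, ← Finset.sum_add_distrib,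
    ← Finset.sum_sub_distrib]
  refine Finset.sum_congr rfl fun K _ => ?_
  linear_combination u K * hQ.powDiffQuot_mul_sub_apply_zero x K n

end IsTridiagonal

theorem stmt19 (d : ℕ) (u : ℕ → ℂ) (Q : ℕ → ℕ → ℂ)
    (htri : ∀ n m : ℕ, 1 < ((n : ℤ) - m).natAbs → Q n m = 0)
    (hsymm : ∀ n m, Q n m = Q m n)
    (hγ : Q 1 0 ≠ 0)
    (hstring1 : (∑ K ∈ Finset.Icc 1 (d + 1), u K * matPow Q (K - 1) 0 0) = 0)
    (hstring2 : (∑ K ∈ Finset.Icc 1 (d + 1), u K * matPow Q (K - 1) 1 0)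
      = 1 / Q 1 0) :
    ∀ x : ℂ,
      Wmat d u Q x 0 0 =
        Q 1 0 ^ 2 * Wmat d u Q x 1 1 * Wmat d u Q x 0 0
          - Q 1 0 * Wmat d u Q x 1 0 *
            ((∑ K ∈ Finset.Icc 1 (d + 1), u K * x ^ (K - 1))
              + Q 1 0 * Wmat d u Q x 1 0) := by
  intro x
  have hQ : IsTridiagonal Q := htri
  have hW : Wmat d u Q x 0 1 = Wmat d u Q x 1 0 := by
    simp only [Wmat, hQ.matPow_symm hsymm _ 0 1]
  have row0 := hQ.Wmat_mul_sub_apply_zero d u x 0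
  have row1 := hQ.Wmat_mul_sub_apply_zero d u x 1
  rw [hstring1, hW, matPow_zero_apply, if_pos rfl] at row0
  rw [hstring2, matPow_zero_apply, if_neg one_ne_zero] at row1
  have row1' : Q 1 0 * (Wmat d u Q x 1 0 * Q 0 0 + Wmat d u Q x 1 1 * Q 1 0
      - x * Wmat d u Q x 1 0) = 1 := by
    rw [row1, mul_zero, sub_zero, mul_one_div_cancel hγ]
  linear_combination Q 1 0 * Wmat d u Q x 1 0 * row0 - Wmat d u Q x 0 0 * row1'
end
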